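/- arXiv:1212.5539 — 5 statements merged into one kernel-verified Lean document; each statement's English description precedes it below -/
import Mathlib

section
/- Let ≤ be a preorder on a set X and define the relation U≤ on ultrafilters of X by: 𝔵 (U≤) 𝔵' if and only if for every pair of sets A ∈ 𝔵 and B ∈ 𝔵' there exist a ∈ A and b ∈ B with a ≤ b. Then 𝔵 (U≤) 𝔵' holds if and only if for every A ∈ 𝔵', the down-closure ↓A = {x ∈ X : ∃ a ∈ A, x ≤ a} belongs to 𝔵. -/
/-- For a preorder on `X` and ultrafilters `𝔵, 𝔵'` on `X`:
(∀ A ∈ 𝔵, ∀ B ∈ 𝔵', ∃ a ∈ A, ∃ b ∈ B, a ≤ b) iff the down-closure of every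
member of `𝔵'` belongs to `𝔵`. -/
theorem stmt4 {X : Type*} [Preorder X] (𝔵 𝔵' : Ultrafilter X) :
    (∀ A ∈ 𝔵, ∀ B ∈ 𝔵', ∃ a ∈ A, ∃ b ∈ B, a ≤ b) ↔
      (∀ A ∈ 𝔵', {x : X | ∃ a ∈ A, x ≤ a} ∈ 𝔵) := by
  constructor
  · intro h A hA
    by_contra hc
    rw [← Ultrafilter.compl_notMem_iff, not_not] at hc
    obtain ⟨a, ha, b, hb, hab⟩ := h _ hc A hA
    exact ha ⟨b, hb, hab⟩
  · intro h A hA B hB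
    have := Filter.inter_mem hA (h B hB)
    obtain ⟨x, hxA, b, hb, hxb⟩ := (𝔵 : Filter X).nonempty_of_mem this
    exact ⟨x, hxA, b, hb, hxb⟩
end

section
/- For any topological space X, let UX denote the set of ultrafilters on X with the topology generated by the sets A^# = {𝔞 ∈ UX : A ∈ 𝔞} for A ⊆ X open. Then for every open A ⊆ X, the basic open set A^# is a compact subset of UX; in particular UX is locally compact. -/
/-!
The topology `τ` is coarser than the Stone topology on `Ultrafilter X`, which is compact and in
which every `A^#` is clopen. Hence every Stone-closed set is `τ`-compact: this covers each `A^#`,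
and also the finite intersections of the generators of `τ`, which form a basis of `τ`.
-/

open TopologicalSpace

section GenerateFrom

variable {α : Type*} [t : TopologicalSpace α] [CompactSpace α] {g : Set (Set α)}

theorem IsClosed.isCompact_generateFrom (hg : ∀ s ∈ g, IsOpen s) {s : Set α} (hs : IsClosed s) :
    @IsCompact α (generateFrom g) s := by
  have hid : @Continuous α α t (generateFrom g) id := continuous_id_of_le (le_generateFrom hg)
  simpa using @IsCompact.image α α t (generateFrom g) s id hs.isCompact hid

theorem locallyCompactSpace_generateFrom_of_isClopen (hg : ∀ s ∈ g, IsClopen s) :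
    @LocallyCompactSpace α (generateFrom g) := by
  have hbasis := @isTopologicalBasis_of_subbasis α (generateFrom g) g rfl
  refine @LocallyCompactSpace.of_hasBasis α (generateFrom g) _ _ _
    (fun _ => @IsTopologicalBasis.nhds_hasBasis α (generateFrom g) _ hbasis _) ?_
  rintro a _ ⟨⟨f, ⟨-, hfg⟩, rfl⟩, -⟩
  exact (isClosed_sInter fun s hs => (hg s (hfg hs)).isClosed).isCompact_generateFrom
    fun s hs => (hg s hs).isOpen

end GenerateFrom

/-- For a topological space `X`, equip the set `UX` of ultrafilters on `X` with the
topology generated by the sets `A^# = {𝔞 | A ∈ 𝔞}` for `A ⊆ X` open.  Then every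
such basic open set `A^#` is compact, and `UX` is locally compact. -/
theorem stmt7 {X : Type*} [TopologicalSpace X]
    (τ : TopologicalSpace (Ultrafilter X))
    (hτ : τ = TopologicalSpace.generateFrom
      {S : Set (Ultrafilter X) | ∃ A : Set X, IsOpen A ∧ S = {𝔞 : Ultrafilter X | A ∈ 𝔞}}) :
    (∀ A : Set X, IsOpen A → @IsCompact (Ultrafilter X) τ {𝔞 : Ultrafilter X | A ∈ 𝔞}) ∧
    @LocallyCompactSpace (Ultrafilter X) τ := by
  subst hτ
  have hclopen : ∀ S ∈ {S : Set (Ultrafilter X) | ∃ A : Set X, IsOpen A ∧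
      S = {𝔞 : Ultrafilter X | A ∈ 𝔞}}, IsClopen S := by
    rintro _ ⟨A, -, rfl⟩
    exact ⟨ultrafilter_isClosed_basic A, ultrafilter_isOpen_basic A⟩
  exact ⟨fun A _ => (ultrafilter_isClosed_basic A).isCompact_generateFrom
      fun S hS => (hclopen S hS).isOpen,
    locallyCompactSpace_generateFrom_of_isClopen hclopen⟩
end

section
/- Let X be a topological space and 𝔭 an ultrafilter on the set VX of closed subsets of X. Then the set μ(𝔭) = {x ∈ X : ∀ open V ∋ x, V^◇ ∈ 𝔭} equals ⋂_{𝒜 ∈ 𝔭} cl(⋃ 𝒜), and μ(𝔭) is a closed subset of X. -/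
/-- For an ultrafilter `𝔭` on the set of closed subsets of a topological space `X`,
the set `μ(𝔭) = {x | ∀ open V ∋ x, V^◇ ∈ 𝔭}` equals `⋂_{𝒜 ∈ 𝔭} cl (⋃ 𝒜)`,
and `μ(𝔭)` is closed. -/
theorem stmt11 {X : Type*} [TopologicalSpace X]
    (𝔭 : Ultrafilter {A : Set X // IsClosed A}) :
    ({x : X | ∀ V : Set X, IsOpen V → x ∈ V →
        {A : {A : Set X // IsClosed A} | (A : Set X) ∩ V ≠ ∅} ∈ 𝔭} =
      ⋂ 𝒜 ∈ (𝔭 : Filter {A : Set X // IsClosed A}).sets,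
        closure (⋃ B ∈ 𝒜, (B : Set X))) ∧
    IsClosed {x : X | ∀ V : Set X, IsOpen V → x ∈ V →
        {A : {A : Set X // IsClosed A} | (A : Set X) ∩ V ≠ ∅} ∈ 𝔭} := by
  have heq : ({x : X | ∀ V : Set X, IsOpen V → x ∈ V →
        {A : {A : Set X // IsClosed A} | (A : Set X) ∩ V ≠ ∅} ∈ 𝔭} =
      ⋂ 𝒜 ∈ (𝔭 : Filter {A : Set X // IsClosed A}).sets,
        closure (⋃ B ∈ 𝒜, (B : Set X))) := by
    ext x
    simp only [Set.mem_setOf_eq, Set.mem_iInter]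
    constructor
    · intro h 𝒜 h𝒜
      rw [mem_closure_iff]
      intro V hV hxV
      have hd := h V hV hxV
      obtain ⟨A, hAd, hA𝒜⟩ :=
        Filter.nonempty_of_mem (Filter.inter_mem hd h𝒜)
      obtain ⟨y, hyA, hyV⟩ := Set.nonempty_iff_ne_empty.mpr hAd
      exact ⟨y, hyV, Set.mem_biUnion hA𝒜 hyA⟩
    · intro h V hV hxV
      by_contra hc
      have hcompl : {A : {A : Set X // IsClosed A} | (A : Set X) ∩ V ≠ ∅}ᶜ ∈ 𝔭 :=
        (Ultrafilter.compl_mem_iff_notMem).mpr hc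
      have hx := h _ hcompl
      have hsub : (⋃ B ∈ {A : {A : Set X // IsClosed A} | (A : Set X) ∩ V ≠ ∅}ᶜ,
          (B : Set X)) ⊆ Vᶜ := by
        intro y hy
        obtain ⟨B, hB, hyB⟩ := Set.mem_iUnion₂.mp hy
        simp only [Set.mem_compl_iff, Set.mem_setOf_eq, not_not] at hB
        intro hyV
        exact absurd hB (Set.nonempty_iff_ne_empty.mp ⟨y, hyB, hyV⟩)
      have : x ∈ Vᶜ := by
        have := closure_mono hsub hx
        rwa [hV.isClosed_compl.closure_eq] at this
      exact this hxV
  refine ⟨heq, ?_⟩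
  rw [heq]
  exact isClosed_biInter fun _ _ => isClosed_closure
end

section
/- Let X be a topological space with the property that every ultrafilter on X has a smallest convergence point with respect to the specialization preorder (taken so that opens are down-closed): i.e., for every ultrafilter 𝔵 there is x₀ with 𝔵 → x₀ and x₀ ≤ x for every limit point x of 𝔵. Then in the lower Vietoris hyperspace VX of closed subsets of X, the smallest-limit-point closed set μ(𝔭) = ⋂_{𝒜∈𝔭} cl(⋃𝒜) of an ultrafilter 𝔭 on VX is again a closed set, and 𝔭 converges (in the lower Vietoris topology) exactly to those closed sets A with A ⊆ μ(𝔭). -/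
/-- Suppose every ultrafilter on `X` has a smallest convergence point (w.r.t. the
specialization preorder `x ≤ y ↔ ∀ open U, y ∈ U → x ∈ U`, so opens are down-closed).
Then, for every ultrafilter `𝔭` on the lower Vietoris hyperspace of closed subsets of
`X`, the set `μ(𝔭) = ⋂_{𝒜 ∈ 𝔭} cl (⋃ 𝒜)` is closed, and `𝔭` converges in the lower
Vietoris topology exactly to those closed sets `A` with `A ⊆ μ(𝔭)`. -/
theorem stmt12 {X : Type*} [TopologicalSpace X]
    (hsmall : ∀ 𝔵 : Ultrafilter X, ∃ x₀ : X,
      (∀ U : Set X, IsOpen U → x₀ ∈ U → U ∈ 𝔵) ∧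
      ∀ x : X, (∀ U : Set X, IsOpen U → x ∈ U → U ∈ 𝔵) →
        ∀ U : Set X, IsOpen U → x ∈ U → x₀ ∈ U)
    (τ : TopologicalSpace {A : Set X // IsClosed A})
    (hτ : τ = TopologicalSpace.generateFrom
      {S : Set {A : Set X // IsClosed A} | ∃ V : Set X, IsOpen V ∧
        S = {A : {A : Set X // IsClosed A} | (A : Set X) ∩ V ≠ ∅}})
    (𝔭 : Ultrafilter {A : Set X // IsClosed A}) :
    IsClosed (⋂ 𝒜 ∈ (𝔭 : Filter {A : Set X // IsClosed A}).sets,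
        closure (⋃ B ∈ 𝒜, (B : Set X))) ∧
    ∀ A : {A : Set X // IsClosed A},
      (∀ S : Set {A : Set X // IsClosed A}, @IsOpen _ τ S → A ∈ S → S ∈ 𝔭) ↔
        (A : Set X) ⊆ ⋂ 𝒜 ∈ (𝔭 : Filter {A : Set X // IsClosed A}).sets,
          closure (⋃ B ∈ 𝒜, (B : Set X)) := by
  constructor
  · exact isClosed_biInter fun _ _ => isClosed_closure
  · intro A
    constructor
    · intro hconv x hx
      simp only [Set.mem_iInter]
      intro 𝒜 h𝒜
      rw [mem_closure_iff]
      intro V hV hxV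
      have hS : @IsOpen _ τ {B : {A : Set X // IsClosed A} | (B : Set X) ∩ V ≠ ∅} := by
        rw [hτ]; exact TopologicalSpace.GenerateOpen.basic _ ⟨V, hV, rfl⟩
      have hmem : A ∈ {B : {A : Set X // IsClosed A} | (B : Set X) ∩ V ≠ ∅} :=
        Set.nonempty_iff_ne_empty.mp ⟨x, hx, hxV⟩
      have hin : {B : {A : Set X // IsClosed A} | (B : Set X) ∩ V ≠ ∅} ∩ 𝒜 ∈ 𝔭 :=
        Filter.inter_mem (hconv _ hS hmem) h𝒜
      obtain ⟨B, hB1, hB2⟩ := Filter.nonempty_of_mem hin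
      obtain ⟨y, hyB, hyV⟩ := Set.nonempty_iff_ne_empty.mpr hB1
      exact ⟨y, hyV, Set.mem_biUnion hB2 hyB⟩
    · intro hsub S hS hAS
      rw [hτ] at hS
      revert hAS
      induction hS with
      | basic U hU =>
        obtain ⟨V, hV, rfl⟩ := hU
        intro hAS
        by_contra hne
        have hcomp : {B : {A : Set X // IsClosed A} | (B : Set X) ∩ V ≠ ∅}ᶜ ∈ 𝔭 :=
          Ultrafilter.compl_mem_iff_notMem.mpr hne
        obtain ⟨x, hxA, hxV⟩ := Set.nonempty_iff_ne_empty.mpr hAS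
        have hxμ := hsub hxA
        simp only [Set.mem_iInter] at hxμ
        have hxcl := hxμ _ hcomp
        rw [mem_closure_iff] at hxcl
        obtain ⟨y, hyV, hyU⟩ := hxcl V hV hxV
        obtain ⟨B, hB𝒜, hyB⟩ := Set.mem_iUnion₂.mp hyU
        exact hB𝒜 (Set.nonempty_iff_ne_empty.mp ⟨y, hyB, hyV⟩)
      | univ => exact fun _ => Filter.univ_mem
      | inter s t _ _ ihs iht =>
        intro hAS
        exact Filter.inter_mem (ihs hAS.1) (iht hAS.2)
      | sUnion S _ ih =>
        intro hAS
        obtain ⟨t, ht, hAt⟩ := hAS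
        exact Filter.mem_of_superset (ih t ht hAt) (Set.subset_sUnion_of_mem ht)
end

section
/- Let X and Y be topological spaces and f : X → Y a continuous map. Then f is downwards open — meaning: for every ultrafilter 𝔶 on Y, every x ∈ X, from 𝔶 → y for some y with y ≤ f(x) (in the specialization preorder where opens are down-closed) it follows that there exists an ultrafilter 𝔵 on X with 𝔵 → x and 𝔶 (U≤) f(𝔵) (i.e., ↓B ∈ 𝔶 for every B in the pushforward f(𝔵)) — if and only if for every open subset A ⊆ X, the down-closure ↓f(A) is open in Y. -/
/-!
Write `↓B` for `nhdsKer B = {z | ∃ b ∈ B, z ⤳ b}`. If `↓f(A)` is open for every open `A` and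
`𝔶 → y ⤳ f x`, then `↓f(U) ∈ 𝔶` for every open `U ∋ x`. The sets `T` whose upper core
`{z | ∀ w, z ⤳ w → w ∈ T}` lies in `𝔶` form a filter (the `rmap` of `𝔶` along `⤳`), and this
says exactly that its pullback along `f` meets `𝓝 x`. An ultrafilter `𝔵` refining both does the
job: if `↓B ∉ 𝔶` then the upper core of `Bᶜ` contains `(↓B)ᶜ ∈ 𝔶`, so `f ⁻¹' Bᶜ ∈ 𝔵`.
Conversely, the ultrafilter characterisation of open sets shows that `↓f(A)` is open.
-/

open Filter Set Topology

section

variable {X Y : Type*} [TopologicalSpace X] [TopologicalSpace Y]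

/-- `f` is downwards open for the specialization preorder in which opens are down-closed
(`z ≤ w ↔ z ⤳ w`), with `↓B = nhdsKer B`. -/
def IsDownwardsOpen (f : X → Y) : Prop :=
  ∀ (𝔶 : Ultrafilter Y) (x : X) (y : Y), ↑𝔶 ≤ 𝓝 y → y ⤳ f x →
    ∃ 𝔵 : Ultrafilter X, ↑𝔵 ≤ 𝓝 x ∧ ∀ B ∈ 𝔵.map f, nhdsKer B ∈ 𝔶

variable (Y) in
def specializesRel : SetRel Y Y := {p | p.1 ⤳ p.2}

theorem nhdsKer_mem_of_le_rmap_specializes {𝔶 𝔷 : Ultrafilter Y}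
    (h : ↑𝔷 ≤ (𝔶 : Filter Y).rmap (specializesRel Y)) {B : Set Y} (hB : B ∈ 𝔷) :
    nhdsKer B ∈ 𝔶 := by
  by_contra hB'
  have hcore : (nhdsKer B)ᶜ ⊆ SetRel.core (specializesRel Y) Bᶜ :=
    fun z hz w hzw hw => hz (mem_nhdsKer_iff_specializes.2 ⟨w, hw, hzw⟩)
  have hBc : Bᶜ ∈ 𝔷 :=
    h <| (mem_rmap _ _ _).2 <| mem_of_superset (Ultrafilter.compl_mem_iff_notMem.2 hB') hcore
  exact Ultrafilter.compl_notMem_iff.2 hB hBc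

theorem neBot_nhds_inf_comap_rmap_specializes {f : X → Y}
    (hf : ∀ A, IsOpen A → IsOpen (nhdsKer (f '' A))) {𝔶 : Ultrafilter Y} {x : X} {y : Y}
    (h𝔶 : ↑𝔶 ≤ 𝓝 y) (hy : y ⤳ f x) :
    NeBot (𝓝 x ⊓ comap f ((𝔶 : Filter Y).rmap (specializesRel Y))) := by
  refine inf_neBot_iff.2 fun S hS S' hS' => ?_
  obtain ⟨U, hUS, hU, hxU⟩ := mem_nhds_iff.1 hS
  obtain ⟨T, hT, hTS'⟩ := mem_comap.1 hS'
  have hdown : nhdsKer (f '' U) ∈ 𝔶 :=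
    h𝔶 <| (hf U hU).mem_nhds <| mem_nhdsKer_iff_specializes.2 ⟨f x, mem_image_of_mem f hxU, hy⟩
  obtain ⟨z, hzT, hzU⟩ := 𝔶.nonempty_of_mem (inter_mem ((mem_rmap _ _ _).1 hT) hdown)
  obtain ⟨_, ⟨u, hu, rfl⟩, hzu⟩ := mem_nhdsKer_iff_specializes.1 hzU
  exact ⟨u, hUS hu, hTS' (hzT hzu)⟩

theorem IsDownwardsOpen.isOpen_nhdsKer_image {f : X → Y} (hf : IsDownwardsOpen f) {A : Set X}
    (hA : IsOpen A) : IsOpen (nhdsKer (f '' A)) := by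
  refine isOpen_iff_ultrafilter.2 fun z hz 𝔶 h𝔶 => ?_
  obtain ⟨_, ⟨a, ha, rfl⟩, hza⟩ := mem_nhdsKer_iff_specializes.1 hz
  obtain ⟨𝔵, h𝔵, hmap⟩ := hf 𝔶 a z h𝔶 hza
  exact hmap _ <| Ultrafilter.mem_map.2 <|
    mem_of_superset (h𝔵 (hA.mem_nhds ha)) (subset_preimage_image f A)

theorem isDownwardsOpen_of_isOpen_nhdsKer_image {f : X → Y}
    (hf : ∀ A, IsOpen A → IsOpen (nhdsKer (f '' A))) : IsDownwardsOpen f := by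
  intro 𝔶 x y h𝔶 hy
  have := neBot_nhds_inf_comap_rmap_specializes hf h𝔶 hy
  let 𝔵 := Ultrafilter.of (𝓝 x ⊓ comap f ((𝔶 : Filter Y).rmap (specializesRel Y)))
  refine ⟨𝔵, (Ultrafilter.of_le _).trans inf_le_left, fun B hB => ?_⟩
  refine nhdsKer_mem_of_le_rmap_specializes ?_ hB
  exact map_le_iff_le_comap.2 ((Ultrafilter.of_le _).trans inf_le_right)

theorem isDownwardsOpen_iff_isOpen_nhdsKer_image {f : X → Y} :
    IsDownwardsOpen f ↔ ∀ A, IsOpen A → IsOpen (nhdsKer (f '' A)) :=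
  ⟨fun hf _ => hf.isOpen_nhdsKer_image, isDownwardsOpen_of_isOpen_nhdsKer_image⟩

theorem le_nhds_iff_forall_isOpen {l : Filter Y} {y : Y} :
    l ≤ 𝓝 y ↔ ∀ U : Set Y, IsOpen U → y ∈ U → U ∈ l :=
  le_nhds_iff.trans <| forall_congr' fun _ => Imp.swap

end

theorem stmt14_general {X Y : Type*} [TopologicalSpace X] [TopologicalSpace Y]
    (f : X → Y) :
    (∀ (𝔶 : Ultrafilter Y) (x : X) (y : Y),
        (∀ U : Set Y, IsOpen U → y ∈ U → U ∈ 𝔶) →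
        (∀ U : Set Y, IsOpen U → f x ∈ U → y ∈ U) →
        ∃ 𝔵 : Ultrafilter X,
          (∀ U : Set X, IsOpen U → x ∈ U → U ∈ 𝔵) ∧
          ∀ B ∈ Ultrafilter.map f 𝔵,
            {z : Y | ∃ b ∈ B, ∀ U : Set Y, IsOpen U → b ∈ U → z ∈ U} ∈ 𝔶) ↔
      (∀ A : Set X, IsOpen A →
        IsOpen {z : Y | ∃ a ∈ A, ∀ U : Set Y, IsOpen U → f a ∈ U → z ∈ U}) := by
  have hker (B : Set Y) : {z | ∃ b ∈ B, z ⤳ b} = nhdsKer B :=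
    ext fun _ => mem_nhdsKer_iff_specializes.symm
  have hker_image (A : Set X) : {z | ∃ a ∈ A, z ⤳ f a} = nhdsKer (f '' A) := by
    rw [← hker]; simp only [exists_mem_image]
  simp only [← specializes_iff_forall_open, hker, hker_image]
  simpa only [IsDownwardsOpen, le_nhds_iff_forall_isOpen, Ultrafilter.mem_coe] using
    isDownwardsOpen_iff_isOpen_nhdsKer_image (f := f)

/-- A continuous map `f : X → Y` is downwards open (with respect to the specialization
preorders, taken so that opens are down-closed) iff the down-closure of the image of
every open subset of `X` is open in `Y`. -/
theorem stmt14 {X Y : Type*} [TopologicalSpace X] [TopologicalSpace Y]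
    (f : X → Y) (hf : Continuous f) :
    (∀ (𝔶 : Ultrafilter Y) (x : X) (y : Y),
        (∀ U : Set Y, IsOpen U → y ∈ U → U ∈ 𝔶) →
        (∀ U : Set Y, IsOpen U → f x ∈ U → y ∈ U) →
        ∃ 𝔵 : Ultrafilter X,
          (∀ U : Set X, IsOpen U → x ∈ U → U ∈ 𝔵) ∧
          ∀ B ∈ Ultrafilter.map f 𝔵,
            {z : Y | ∃ b ∈ B, ∀ U : Set Y, IsOpen U → b ∈ U → z ∈ U} ∈ 𝔶) ↔
      (∀ A : Set X, IsOpen A →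
        IsOpen {z : Y | ∃ a ∈ A, ∀ U : Set Y, IsOpen U → f a ∈ U → z ∈ U}) :=
  stmt14_general f
end
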